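/- Let (X,d) be a metric space with a family 𝒫 of subsets and maps π_P: X → 𝒫(P) satisfying the almost projection axiom (1): for all x ∈ X, p ∈ P, and all z ∈ π_P(x), d(x,p) ≥ d(x,z) + d(z,p) − C. Then for all x, y ∈ X and z_x ∈ π_P(x), z_y ∈ π_P(y): d(z_x, z_y) < d(x,y) + 6C, provided also diam(π_P(w)) ≤ C for all w ∈ X. -/

import Mathlib

theorem dist_le_dist_add_of_almost_geodesic {X : Type*} [PseudoMetricSpace X] {x y a b : X}
    {C : ℝ} (hxb : dist x a + dist a b - C ≤ dist x b) (hya : dist y b + dist b a - C ≤ dist y a) :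
    dist a b ≤ dist x y + C := by
  have hxb' : dist x b ≤ dist x y + dist y b := dist_triangle x y b
  have hya' : dist y a ≤ dist x y + dist x a := by
    simpa only [dist_comm y x] using dist_triangle y x a
  have hba : dist b a = dist a b := dist_comm b a
  linarith

theorem dist_le_dist_add_of_almost_projection {X : Type*} [PseudoMetricSpace X] {P : Set X}
    {π : X → Set X} (hπ : ∀ x, π x ⊆ P) {C : ℝ}
    (axiom1 : ∀ x, ∀ p ∈ P, ∀ z ∈ π x, dist x z + dist z p - C ≤ dist x p)
    {x y zx zy : X} (hzx : zx ∈ π x) (hzy : zy ∈ π y) :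
    dist zx zy ≤ dist x y + C :=
  dist_le_dist_add_of_almost_geodesic (axiom1 x zy (hπ y hzy) zx hzx)
    (axiom1 y zx (hπ x hzx) zy hzy)

theorem almost_projection_coarse_lipschitz_general {X : Type*} [MetricSpace X] (P : Set X)
    (π : X → Set X) (hπ : ∀ x, π x ⊆ P) (C : ℝ) (hC : 0 < C)
    (axiom1 : ∀ x, ∀ p ∈ P, ∀ z ∈ π x, dist x z + dist z p - C ≤ dist x p)
    (x y zx zy : X) (hzx : zx ∈ π x) (hzy : zy ∈ π y) :
    dist zx zy < dist x y + 6 * C := by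
  have h := dist_le_dist_add_of_almost_projection hπ axiom1 hzx hzy
  linarith

/-- Sisto's coarse Lipschitz property of almost projections: if `π` satisfies the almost
projection axiom `d(x,p) ≥ d(x,z) + d(z,p) − C` for all `z ∈ π(x)`, `p ∈ P`, and projections
of points have diameter at most `C`, then `d(z_x, z_y) < d(x,y) + 6C` for all
`z_x ∈ π(x)`, `z_y ∈ π(y)`. -/
theorem almost_projection_coarse_lipschitz {X : Type*} [MetricSpace X] (P : Set X)
    (π : X → Set X) (hπ : ∀ x, π x ⊆ P) (C : ℝ) (hC : 0 < C)
    (axiom1 : ∀ x, ∀ p ∈ P, ∀ z ∈ π x, dist x z + dist z p - C ≤ dist x p)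
    (hdiam : ∀ w, ∀ z ∈ π w, ∀ z' ∈ π w, dist z z' ≤ C)
    (x y zx zy : X) (hzx : zx ∈ π x) (hzy : zy ∈ π y) :
    dist zx zy < dist x y + 6 * C :=
  almost_projection_coarse_lipschitz_general P π hπ C hC axiom1 x y zx zy hzx hzy
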